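/- Let (Y, ℬ) be a measurable space, (T_j)_{j≥1} measurable maps of Y to itself, and (μ_j)_{j≥0} Borel probability measures on Y with (T_{j+1})_* μ_j = μ_{j+1} for every j ≥ 0. Let U ⊆ Y be measurable with μ_0(U) > 0, write R(x) := inf{ k ≥ 1 : (T_k ∘ ⋯ ∘ T_1)(x) ∈ U } and c(U) := sup_{k≥0} | μ_0(R > k | U) − μ_0(R > k) |, where μ_0(A|U) := μ_0(A ∩ U)/μ_0(U). Let λ be the finite signed measure λ(A) := μ_0(A ∩ U) − μ_0(U) μ_0(A). Then for every N ≥ 1: (i) c(U) ≤ μ_0(R ≤ N | U) + μ_0(R ≤ N) + (1/μ_0(U)) ‖(T_N ∘ ⋯ ∘ T_1)_* λ‖, where ‖·‖ is the total variation norm of a signed measure; (ii) μ_0(R ≤ N | U) ≤ μ_0(R ≤ N)/μ_0(U); and (iii) μ_0(R ≤ N) ≤ Σ_{i=1}^{N} μ_i(U). -/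

import Mathlib

open MeasureTheory Filter Set Topology

noncomputable section

variable {Y : Type*}

/-- The composition `T_k ∘ ⋯ ∘ T_1` of a sequence of maps. -/
def seqComp (T : ℕ → Y → Y) : ℕ → Y → Y
  | 0 => id
  | k + 1 => T (k + 1) ∘ seqComp T k

/-- The event `{R > k}`: the orbit does not enter `U` within the first `k` steps. -/
def surv (T : ℕ → Y → Y) (U : Set Y) (k : ℕ) : Set Y :=
  {x | ∀ i, 1 ≤ i → i ≤ k → seqComp T i x ∉ U}

/-- The event `{R ≤ N}`: the orbit enters `U` within the first `N` steps. -/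
def hitBy (T : ℕ → Y → Y) (U : Set Y) (N : ℕ) : Set Y :=
  {x | ∃ i, 1 ≤ i ∧ i ≤ N ∧ seqComp T i x ∈ U}

/-!
Part (iii) is a union bound, since `μ_0(Φ_i⁻¹ U) = μ_i(U)` for `Φ_i = T_i ∘ ⋯ ∘ T_1`, and (ii) is
monotonicity. For (i), let `S` be the event that the orbit under the shifted sequence
`T_{N+1}, T_{N+2}, …` avoids `U` up to time `k - N`. Then `{R > k} ⊆ Φ_N⁻¹ S ⊆ {R > k} ∪ {R ≤ N}`,
so replacing `{R > k}` by `Φ_N⁻¹ S` costs at most `μ_0(R ≤ N | U) + μ_0(R ≤ N)`, while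
`μ_0(Φ_N⁻¹ S ∩ U) - μ_0(U) μ_0(Φ_N⁻¹ S) = ((Φ_N)_* λ)(S)` is bounded by the total variation.
-/

section SequentialDynamics

theorem seqComp_add (T : ℕ → Y → Y) (N : ℕ) :
    ∀ m, seqComp T (N + m) = seqComp (fun i => T (N + i)) m ∘ seqComp T N
  | 0 => rfl
  | m + 1 => by
    change T (N + m + 1) ∘ seqComp T (N + m) = _
    rw [seqComp_add T N m]
    rfl

theorem compl_hitBy (T : ℕ → Y → Y) (U : Set Y) (k : ℕ) : (hitBy T U k)ᶜ = surv T U k := by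
  ext x
  simp [hitBy, surv]

theorem hitBy_eq_biUnion (T : ℕ → Y → Y) (U : Set Y) (N : ℕ) :
    hitBy T U N = ⋃ i ∈ Finset.Icc 1 N, seqComp T i ⁻¹' U := by
  ext x
  simp [hitBy, and_assoc]

theorem surv_subset_preimage_surv_shift (T : ℕ → Y → Y) (U : Set Y) (N k : ℕ) :
    surv T U k ⊆ seqComp T N ⁻¹' surv (fun i => T (N + i)) U (k - N) := by
  intro x hx i hi hik
  rw [← Function.comp_apply (f := seqComp _ i), ← seqComp_add]
  exact hx (N + i) (by omega) (by omega)

theorem preimage_surv_shift_subset (T : ℕ → Y → Y) (U : Set Y) (N k : ℕ) :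
    seqComp T N ⁻¹' surv (fun i => T (N + i)) U (k - N) ⊆ surv T U k ∪ hitBy T U N := by
  intro x hx
  by_cases hxN : x ∈ hitBy T U N
  · exact Or.inr hxN
  refine Or.inl fun i hi hik hiU => ?_
  rcases le_or_gt i N with hiN | hiN
  · exact hxN ⟨i, hi, hiN, hiU⟩
  · have hshift := hx (i - N) (by omega) (by omega)
    rw [← Function.comp_apply (f := seqComp _ (i - N)), ← seqComp_add,
      Nat.add_sub_cancel' hiN.le] at hshift
    exact hshift hiU

variable {T : ℕ → Y → Y} {U : Set Y} [MeasurableSpace Y]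

theorem measurable_seqComp (hT : ∀ j, Measurable (T j)) : ∀ n, Measurable (seqComp T n)
  | 0 => measurable_id
  | n + 1 => (hT (n + 1)).comp (measurable_seqComp hT n)

theorem measurableSet_hitBy (hT : ∀ j, Measurable (T j)) (hU : MeasurableSet U) (N : ℕ) :
    MeasurableSet (hitBy T U N) := by
  rw [hitBy_eq_biUnion]
  exact Finset.measurableSet_biUnion _ fun i _ => measurable_seqComp hT i hU

theorem measurableSet_surv (hT : ∀ j, Measurable (T j)) (hU : MeasurableSet U) (k : ℕ) :
    MeasurableSet (surv T U k) :=
  compl_hitBy T U k ▸ (measurableSet_hitBy hT hU k).compl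

theorem map_seqComp (hT : ∀ j, Measurable (T j)) {μ : ℕ → Measure Y}
    (hμ : ∀ j, (μ j).map (T (j + 1)) = μ (j + 1)) : ∀ i, (μ 0).map (seqComp T i) = μ i
  | 0 => Measure.map_id
  | i + 1 => by
    rw [seqComp, ← Measure.map_map (hT (i + 1)) (measurable_seqComp hT i), map_seqComp hT hμ i,
      hμ i]

theorem measureReal_hitBy_le_sum (hT : ∀ j, Measurable (T j)) {μ : ℕ → Measure Y}
    (hμ : ∀ j, (μ j).map (T (j + 1)) = μ (j + 1))
    (hU : MeasurableSet U) (N : ℕ) :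
    (μ 0).real (hitBy T U N) ≤ ∑ i ∈ Finset.Icc 1 N, (μ i).real U := by
  rw [hitBy_eq_biUnion]
  refine (measureReal_biUnion_finset_le _ _).trans_eq (Finset.sum_congr rfl fun i _ => ?_)
  rw [← map_seqComp hT hμ i, map_measureReal_apply (measurable_seqComp hT i) hU]

end SequentialDynamics

theorem abs_div_sub_le_of_sandwich {x x' a y y' b u : ℝ} (hu : 0 < u) (hx : x ≤ x')
    (hx' : x' ≤ x + a) (hy : y ≤ y') (hy' : y' ≤ y + b) :
    |x / u - y| ≤ |x' / u - y'| + a / u + b := by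
  have hxu : x / u ≤ x' / u := div_le_div_of_nonneg_right hx hu.le
  have hxu' : x' / u ≤ x / u + a / u := by
    rw [← add_div]
    exact div_le_div_of_nonneg_right hx' hu.le
  have hle := le_abs_self (x' / u - y')
  have hge := neg_abs_le (x' / u - y')
  rw [abs_le]
  constructor <;> linarith

section Correlation

variable [MeasurableSpace Y] (μ : Measure Y) [IsFiniteMeasure μ] {U : Set Y}

theorem abs_condMeasureReal_sub_le_of_subset {S B H : Set Y} (hSB : S ⊆ B) (hB : B ⊆ S ∪ H)
    (hU : 0 < μ.real U) :
    |μ.real (S ∩ U) / μ.real U - μ.real S| ≤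
      |μ.real (B ∩ U) / μ.real U - μ.real B| + μ.real (H ∩ U) / μ.real U + μ.real H := by
  refine abs_div_sub_le_of_sandwich hU (measureReal_mono (inter_subset_inter_left U hSB)) ?_
    (measureReal_mono hSB) ((measureReal_mono hB).trans (measureReal_union_le _ _))
  refine (measureReal_mono ?_).trans (measureReal_union_le _ _)
  rw [← union_inter_distrib_right]
  exact inter_subset_inter_left U hB

theorem restrict_toSignedMeasure_sub_smul_apply (c : ℝ) {A : Set Y}
    (hA : MeasurableSet A) :
    ((μ.restrict U).toSignedMeasure - c • μ.toSignedMeasure) A = μ.real (A ∩ U) - c * μ.real A := by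
  rw [sub_apply, smul_apply, Measure.toSignedMeasure_apply_measurable hA,
    Measure.toSignedMeasure_apply_measurable hA, measureReal_restrict_apply hA, smul_eq_mul]

theorem abs_condMeasureReal_sub_le_totalVariation_map {f : Y → Y} (hf : Measurable f)
    {S : Set Y} (hS : MeasurableSet S) (hU : 0 < μ.real U) :
    |μ.real (f ⁻¹' S ∩ U) / μ.real U - μ.real (f ⁻¹' S)| ≤ 1 / μ.real U *
      (SignedMeasure.totalVariation
        (((μ.restrict U).toSignedMeasure - μ.real U • μ.toSignedMeasure).map f)).real univ := by
  set lam := (μ.restrict U).toSignedMeasure - μ.real U • μ.toSignedMeasure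
  have hlam : lam.map f S = μ.real (f ⁻¹' S ∩ U) - μ.real U * μ.real (f ⁻¹' S) := by
    rw [VectorMeasure.map_apply _ hf hS, restrict_toSignedMeasure_sub_smul_apply μ _ (hf hS)]
  have hdiv : μ.real (f ⁻¹' S ∩ U) / μ.real U - μ.real (f ⁻¹' S) = lam.map f S / μ.real U := by
    rw [hlam]
    field_simp
  rw [hdiv, abs_div, abs_of_pos hU, div_eq_mul_one_div, mul_comm]
  gcongr
  exact (SignedMeasure.norm_le_totalVariation _ S).trans (measureReal_mono (subset_univ S))

end Correlation

theorem stmt1 [MeasurableSpace Y]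
    (T : ℕ → Y → Y) (hT : ∀ j, Measurable (T j))
    (μ : ℕ → Measure Y) [hprob : ∀ j, IsProbabilityMeasure (μ j)]
    (hequiv : ∀ j : ℕ, (μ j).map (T (j + 1)) = μ (j + 1))
    (U : Set Y) (hU : MeasurableSet U) (hUpos : 0 < μ 0 U)
    (cU : ℝ)
    (hcU : cU = ⨆ k : ℕ,
      |(μ 0 (surv T U k ∩ U)).toReal / (μ 0 U).toReal - (μ 0 (surv T U k)).toReal|)
    (lam : SignedMeasure Y)
    (hlam : lam = ((μ 0).restrict U).toSignedMeasure -
      (μ 0 U).toReal • (μ 0).toSignedMeasure) :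
    ∀ N : ℕ, 1 ≤ N →
      (cU ≤ (μ 0 (hitBy T U N ∩ U)).toReal / (μ 0 U).toReal + (μ 0 (hitBy T U N)).toReal +
        (1 / (μ 0 U).toReal) * ((SignedMeasure.totalVariation (lam.map (seqComp T N))) Set.univ).toReal) ∧
      ((μ 0 (hitBy T U N ∩ U)).toReal / (μ 0 U).toReal ≤
        (μ 0 (hitBy T U N)).toReal / (μ 0 U).toReal) ∧
      ((μ 0 (hitBy T U N)).toReal ≤ ∑ i ∈ Finset.Icc 1 N, (μ i U).toReal) := by
  intro N _
  subst hcU hlam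
  simp only [← measureReal_def]
  have hu : 0 < (μ 0).real U := ENNReal.toReal_pos hUpos.ne' (measure_ne_top _ _)
  refine ⟨ciSup_le fun k => ?_, div_le_div_of_nonneg_right (measureReal_mono inter_subset_left)
    measureReal_nonneg, measureReal_hitBy_le_sum hT hequiv hU N⟩
  have hS := measurableSet_surv (fun j => hT (N + j)) hU (k - N)
  linarith [abs_condMeasureReal_sub_le_of_subset (μ 0) (surv_subset_preimage_surv_shift T U N k)
      (preimage_surv_shift_subset T U N k) hu,
    abs_condMeasureReal_sub_le_totalVariation_map (μ 0) (measurable_seqComp hT N) hS hu]
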